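/- Let d be a nonzero Floer-type differential on C. If (α_1,…,α_p, η_1,…,η_r, γ_1,…,γ_r) and (α'_1,…,α'_{p'}, η'_1,…,η'_{r'}, γ'_1,…,γ'_{r'}) are two singular decompositions of (C, d), then r ≥ 1, r' ≥ 1, and their minimal bars coincide: min_{1≤j≤r} (A(γ_j) − A(η_j)) = min_{1≤j≤r'} (A(γ'_j) − A(η'_j)). -/

import Mathlib

/-!  Common setup: `Λ := LaurentSeries (ZMod 2)`, `C := Fin n → Λ`, the action
functional `A`, orthogonality, capped orbits, the pairing `⟨d x̄, ȳ⟩`,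
Floer-type differentials and singular decompositions. -/

noncomputable section

/-- The Novikov field `Λ = 𝔽₂((q))`, realized as formal Laurent series over `ZMod 2`. -/
abbrev Lam : Type := LaurentSeries (ZMod 2)

open Classical in
/-- The action `A : C → ℝ ∪ {+∞}`: `A 0 = ⊤` and for `ξ ≠ 0`,
`A ξ = min { a i + λ₀ • ord (ξ i) | ξ i ≠ 0 }`. -/
def actA (n : ℕ) (lam0 : ℝ) (a : Fin n → ℝ) (xi : Fin n → Lam) : WithTop ℝ :=
  Finset.univ.inf fun i : Fin n =>
    if xi i = 0 then (⊤ : WithTop ℝ)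
    else ((a i + lam0 * ((xi i).order : ℝ) : ℝ) : WithTop ℝ)

/-- A finite family `(ξ j)` of vectors of `C` is orthogonal if
`A (∑ λ_j • ξ_j) = min_j A (λ_j • ξ_j)` for all coefficients `λ_j ∈ Λ`. -/
def IsOrthogonalFamily (n : ℕ) (lam0 : ℝ) (a : Fin n → ℝ) {ι : Type} [Fintype ι]
    (xi : ι → (Fin n → Lam)) : Prop :=
  ∀ c : ι → Lam,
    actA n lam0 a (∑ j, c j • xi j) = Finset.univ.inf fun j => actA n lam0 a (c j • xi j)

/-- The capped orbit `q^k eᵢ`. -/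
def cappedOrbit (n : ℕ) (i : Fin n) (k : ℤ) : Fin n → Lam :=
  Pi.single i (HahnSeries.single k 1)

/-- `⟨d x̄, ȳ⟩ ∈ 𝔽₂` for `x̄ = q^k eᵢ` and `ȳ = q^l eⱼ`: the `(l - k)`-th Laurent
coefficient of the `j`-th component of `d eᵢ`. -/
def pairing (n : ℕ) (d : (Fin n → Lam) →ₗ[Lam] (Fin n → Lam)) (i j : Fin n) (k l : ℤ) :
    ZMod 2 :=
  ((d (Pi.single i 1)) j).coeff (l - k)

/-- The set of arrow lengths `A ȳ - A x̄` over pairs of capped orbits with `⟨d x̄, ȳ⟩ = 1`. -/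
def arrowLengths (n : ℕ) (lam0 : ℝ) (a : Fin n → ℝ)
    (d : (Fin n → Lam) →ₗ[Lam] (Fin n → Lam)) : Set ℝ :=
  {t : ℝ | ∃ (i j : Fin n) (k l : ℤ),
    pairing n d i j k l = 1 ∧ t = (a j + lam0 * l) - (a i + lam0 * k)}

/-- The set of values `A (d ξ) - A ξ` over `ξ ∈ C` with `d ξ ≠ 0`. -/
def actionGaps (n : ℕ) (lam0 : ℝ) (a : Fin n → ℝ)
    (d : (Fin n → Lam) →ₗ[Lam] (Fin n → Lam)) : Set ℝ :=
  {t : ℝ | ∃ xi : Fin n → Lam, d xi ≠ 0 ∧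
    actA n lam0 a (d xi) = actA n lam0 a xi + (t : WithTop ℝ)}

/-- A Floer-type differential on `C`: a `Λ`-linear map squaring to zero that strictly
increases the action. -/
def IsFloerDifferential (n : ℕ) (lam0 : ℝ) (a : Fin n → ℝ)
    (d : (Fin n → Lam) →ₗ[Lam] (Fin n → Lam)) : Prop :=
  d ∘ₗ d = 0 ∧
    ∀ xi : Fin n → Lam, xi ≠ 0 → d xi ≠ 0 → actA n lam0 a xi < actA n lam0 a (d xi)

/-- A singular decomposition of `(C, d)`: `p + 2r = n` and an orthogonal basis
`α₁,…,α_p, η₁,…,η_r, γ₁,…,γ_r` of `C` over `Λ` with `d αᵢ = 0` and `d ηⱼ = γⱼ`. -/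
def IsSingularDecomposition (n : ℕ) (lam0 : ℝ) (a : Fin n → ℝ)
    (d : (Fin n → Lam) →ₗ[Lam] (Fin n → Lam)) (p r : ℕ)
    (alpha : Fin p → (Fin n → Lam)) (eta gamma : Fin r → (Fin n → Lam)) : Prop :=
  p + 2 * r = n ∧
  IsOrthogonalFamily n lam0 a (Sum.elim alpha (Sum.elim eta gamma)) ∧
  LinearIndependent Lam (Sum.elim alpha (Sum.elim eta gamma)) ∧
  Submodule.span Lam (Set.range (Sum.elim alpha (Sum.elim eta gamma))) = ⊤ ∧
  (∀ i, d (alpha i) = 0) ∧ (∀ j, d (eta j) = gamma j)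

/-- The set of bars `A (γ j) - A (η j)` of a singular decomposition; its infimum is the
minimal bar `β_min` when `r ≥ 1`. -/
def barSet (n : ℕ) (lam0 : ℝ) (a : Fin n → ℝ) {r : ℕ}
    (eta gamma : Fin r → (Fin n → Lam)) : Set ℝ :=
  {t : ℝ | ∃ j : Fin r, actA n lam0 a (gamma j) = actA n lam0 a (eta j) + (t : WithTop ℝ)}

end

/-! The minimal bar is the infimum of the action gaps `A (d ξ) - A ξ` over `d ξ ≠ 0`, which
depends on `d` alone. Every bar is such a gap (take `ξ = η_j`). Conversely, writing
`ξ = ∑ c_k v_k` in a singular decomposition gives `d ξ = ∑ c_{η_j} γ_j`, and orthogonality yields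
some `j` with `A (d ξ) = λ₀ ord c_{η_j} + A γ_j` while `A ξ ≤ λ₀ ord c_{η_j} + A η_j`; so every
gap dominates a bar. Finally `r ≥ 1`, since a nonzero `d` cannot vanish on a basis. -/

section

variable {n : ℕ} {lam0 : ℝ} {a : Fin n → ℝ}

lemma actA_eq_top_iff {xi : Fin n → Lam} : actA n lam0 a xi = ⊤ ↔ xi = 0 := by
  simp only [actA, Finset.inf_eq_top_iff, Finset.mem_univ, true_implies, ite_eq_left_iff,
    WithTop.coe_ne_top, imp_false, not_not, funext_iff, Pi.zero_apply]

@[simp]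
lemma actA_zero : actA n lam0 a 0 = ⊤ :=
  actA_eq_top_iff.mpr rfl

lemma actA_ne_top {xi : Fin n → Lam} (hxi : xi ≠ 0) : actA n lam0 a xi ≠ ⊤ :=
  actA_eq_top_iff.not.mpr hxi

lemma exists_actA_eq_actA_add {xi zeta : Fin n → Lam} (hxi : xi ≠ 0) (hzeta : zeta ≠ 0) :
    ∃ s : ℝ, actA n lam0 a zeta = actA n lam0 a xi + s := by
  obtain ⟨x, hx⟩ := WithTop.ne_top_iff_exists.mp (actA_ne_top (lam0 := lam0) (a := a) hxi)
  obtain ⟨z, hz⟩ := WithTop.ne_top_iff_exists.mp (actA_ne_top (lam0 := lam0) (a := a) hzeta)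
  exact ⟨z - x, by rw [← hx, ← hz, ← WithTop.coe_add, add_sub_cancel]⟩

lemma actA_smul {c : Lam} (hc : c ≠ 0) (xi : Fin n → Lam) :
    actA n lam0 a (c • xi) = ((lam0 * c.order : ℝ) : WithTop ℝ) + actA n lam0 a xi := by
  rw [actA, actA, Finset.apply_inf_eq_inf_comp_of_linearOrder (_ + ·)
    (fun _ _ h => add_le_add_right h _) (WithTop.add_top _)]
  refine Finset.inf_congr rfl fun i _ => ?_
  by_cases h : xi i = 0
  · simp [h]
  · simp only [Pi.smul_apply, smul_eq_mul, Function.comp_apply, if_neg h,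
      if_neg (mul_ne_zero hc h), HahnSeries.order_mul hc h, ← WithTop.coe_add, WithTop.coe_inj]
    push_cast
    ring

namespace IsOrthogonalFamily

variable {ι κ : Type} [Fintype ι] [Fintype κ]

lemma sumElim_right {u : ι → Fin n → Lam} {w : κ → Fin n → Lam}
    (h : IsOrthogonalFamily n lam0 a (Sum.elim u w)) : IsOrthogonalFamily n lam0 a w := by
  intro c
  simpa [Fintype.sum_sum_type, ← Finset.univ_disjSum_univ] using h (Sum.elim 0 c)

variable {w : κ → Fin n → Lam}

lemma actA_sum_le (h : IsOrthogonalFamily n lam0 a w) (c : κ → Lam) (k : κ) :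
    actA n lam0 a (∑ k, c k • w k) ≤ actA n lam0 a (c k • w k) := by
  rw [h c]
  exact Finset.inf_le (Finset.mem_univ k)

lemma exists_actA_sum_eq (h : IsOrthogonalFamily n lam0 a w) {c : κ → Lam}
    (hsum : ∑ k, c k • w k ≠ 0) :
    ∃ k, c k ≠ 0 ∧ actA n lam0 a (∑ k, c k • w k) = actA n lam0 a (c k • w k) := by
  obtain ⟨k₀, -⟩ := Finset.exists_ne_zero_of_sum_ne_zero hsum
  obtain ⟨k, -, hk⟩ := Finset.exists_mem_eq_inf Finset.univ ⟨k₀, Finset.mem_univ k₀⟩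
    fun k => actA n lam0 a (c k • w k)
  refine ⟨k, fun hck => hsum ?_, (h c).trans hk⟩
  rw [← actA_eq_top_iff (lam0 := lam0) (a := a), h c, hk, hck, zero_smul, actA_zero]

end IsOrthogonalFamily

namespace IsSingularDecomposition

variable {d : (Fin n → Lam) →ₗ[Lam] (Fin n → Lam)} {p r : ℕ} {alpha : Fin p → Fin n → Lam}
  {eta gamma : Fin r → Fin n → Lam}

lemma one_le (hd : d ≠ 0) (hdec : IsSingularDecomposition n lam0 a d p r alpha eta gamma) :
    1 ≤ r := by
  rw [Nat.one_le_iff_ne_zero]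
  rintro rfl
  obtain ⟨-, -, -, hspan, halpha, -⟩ := hdec
  refine hd (LinearMap.ext_on_range hspan fun k => ?_)
  rcases k with i | j | j
  · exact halpha i
  · exact j.elim0
  · exact j.elim0

variable (hdec : IsSingularDecomposition n lam0 a d p r alpha eta gamma)
include hdec

lemma eta_ne_zero (j : Fin r) : eta j ≠ 0 :=
  hdec.2.2.1.ne_zero (Sum.inr (Sum.inl j))

lemma gamma_ne_zero (j : Fin r) : gamma j ≠ 0 :=
  hdec.2.2.1.ne_zero (Sum.inr (Sum.inr j))

lemma barSet_subset_actionGaps : barSet n lam0 a eta gamma ⊆ actionGaps n lam0 a d := by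
  rintro t ⟨j, hj⟩
  have heta : d (eta j) = gamma j := hdec.2.2.2.2.2 j
  exact ⟨eta j, heta ▸ hdec.gamma_ne_zero j, heta ▸ hj⟩

lemma map_sum_eq (hdd : d ∘ₗ d = 0) (c : Fin p ⊕ (Fin r ⊕ Fin r) → Lam) :
    d (∑ k, c k • Sum.elim alpha (Sum.elim eta gamma) k)
      = ∑ j, c (Sum.inr (Sum.inl j)) • gamma j := by
  obtain ⟨-, -, -, -, halpha, heta⟩ := hdec
  have hgamma (j : Fin r) : d (gamma j) = 0 := by
    rw [← heta j, ← LinearMap.comp_apply, hdd, LinearMap.zero_apply]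
  simp [Fintype.sum_sum_type, halpha, heta, hgamma]

lemma exists_mem_barSet_le (hdd : d ∘ₗ d = 0) {t : ℝ} (ht : t ∈ actionGaps n lam0 a d) :
    ∃ s ∈ barSet n lam0 a eta gamma, s ≤ t := by
  obtain ⟨xi, hdxi, hgap⟩ := ht
  have hxi : xi ≠ 0 := by rintro rfl; exact hdxi (map_zero d)
  obtain ⟨-, horth, -, hspan, -, -⟩ := id hdec
  have hxi_mem : xi ∈ Submodule.span Lam (Set.range (Sum.elim alpha (Sum.elim eta gamma))) := by
    rw [hspan]
    exact Submodule.mem_top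
  obtain ⟨c, hc⟩ := (Submodule.mem_span_range_iff_exists_fun Lam).mp hxi_mem
  have hdxi_sum : d xi = ∑ j, c (Sum.inr (Sum.inl j)) • gamma j := by
    rw [← hc, hdec.map_sum_eq hdd]
  rw [hdxi_sum] at hdxi hgap
  obtain ⟨j, hcj, hdxi_eq⟩ := horth.sumElim_right.sumElim_right.exists_actA_sum_eq hdxi
  obtain ⟨s, hs⟩ := exists_actA_eq_actA_add (lam0 := lam0) (a := a)
    (hdec.eta_ne_zero j) (hdec.gamma_ne_zero j)
  refine ⟨s, ⟨j, hs⟩, ?_⟩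
  have hle : actA n lam0 a xi + s ≤ actA n lam0 a xi + t :=
    calc _ ≤ actA n lam0 a (c (Sum.inr (Sum.inl j)) • eta j) + s :=
          add_le_add_left (hc ▸ horth.actA_sum_le c (Sum.inr (Sum.inl j))) _
      _ = actA n lam0 a (c (Sum.inr (Sum.inl j)) • gamma j) := by
          rw [actA_smul hcj, actA_smul hcj, hs, add_assoc]
      _ = _ := hdxi_eq.symm.trans hgap
  exact WithTop.coe_le_coe.mp ((WithTop.add_le_add_iff_left (actA_ne_top hxi)).mp hle)

lemma sInf_barSet_eq (hdd : d ∘ₗ d = 0) :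
    sInf (barSet n lam0 a eta gamma) = sInf (actionGaps n lam0 a d) :=
  csInf_eq_csInf_of_forall_exists_le
    (fun s hs => ⟨s, hdec.barSet_subset_actionGaps hs, le_rfl⟩)
    fun _ ht => hdec.exists_mem_barSet_le hdd ht

end IsSingularDecomposition

end

theorem minimalBar_wellDefined_general (n : ℕ) (lam0 : ℝ) (a : Fin n → ℝ)
    (d : (Fin n → Lam) →ₗ[Lam] (Fin n → Lam)) (hd : d ≠ 0)
    (hFloer : IsFloerDifferential n lam0 a d)
    (p r : ℕ) (alpha : Fin p → (Fin n → Lam)) (eta gamma : Fin r → (Fin n → Lam))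
    (hdec : IsSingularDecomposition n lam0 a d p r alpha eta gamma)
    (p' r' : ℕ) (alpha' : Fin p' → (Fin n → Lam)) (eta' gamma' : Fin r' → (Fin n → Lam))
    (hdec' : IsSingularDecomposition n lam0 a d p' r' alpha' eta' gamma') :
    1 ≤ r ∧ 1 ≤ r' ∧
      sInf (barSet n lam0 a eta gamma) = sInf (barSet n lam0 a eta' gamma') := by
  refine ⟨hdec.one_le hd, hdec'.one_le hd, ?_⟩
  rw [hdec.sInf_barSet_eq hFloer.1, hdec'.sInf_barSet_eq hFloer.1]

/-- For a nonzero Floer-type differential `d` on `C`, any two singular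
decompositions of `(C, d)` have `r ≥ 1`, `r' ≥ 1` and equal minimal bars. -/
theorem minimalBar_wellDefined (n : ℕ) (lam0 : ℝ) (hlam0 : 0 < lam0) (a : Fin n → ℝ)
    (d : (Fin n → Lam) →ₗ[Lam] (Fin n → Lam)) (hd : d ≠ 0)
    (hFloer : IsFloerDifferential n lam0 a d)
    (p r : ℕ) (alpha : Fin p → (Fin n → Lam)) (eta gamma : Fin r → (Fin n → Lam))
    (hdec : IsSingularDecomposition n lam0 a d p r alpha eta gamma)
    (p' r' : ℕ) (alpha' : Fin p' → (Fin n → Lam)) (eta' gamma' : Fin r' → (Fin n → Lam))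
    (hdec' : IsSingularDecomposition n lam0 a d p' r' alpha' eta' gamma') :
    1 ≤ r ∧ 1 ≤ r' ∧
      sInf (barSet n lam0 a eta gamma) = sInf (barSet n lam0 a eta' gamma') :=
  minimalBar_wellDefined_general n lam0 a d hd hFloer p r alpha eta gamma hdec p' r' alpha' eta'
    gamma' hdec'
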